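/- Fix a positive integer N_t and real numbers δ and ψ. Let D = {(m,n) ∈ ℤ × ℤ : 1 ≤ n ≤ N_t − 1 and n + 1 ≤ m ≤ N_t} and, for (m,n) ∈ D, let q_{m,n}(ω) = 2 cos((m − n)πψ) · g_m(ω) · g_n(ω), where g_k(ω) = Sa(δ(ω − (k−1)π)). Then the function ω ↦ ∑_{(m,n) ∈ D} q_{m,n}(ω) is symmetric about ω = (N_t − 1)π/2; that is, ∑_{(m,n) ∈ D} q_{m,n}((N_t − 1)π − ω) = ∑_{(m,n) ∈ D} q_{m,n}(ω) for every real ω. (Conclusion of the appendix: the cross-term sum in the beamforming gain is symmetric about ω = (N_t−1)π/2.) -/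

import Mathlib

open Real Finset

/-- The normalized sample function `Sa x = sin x / x` with `Sa 0 = 1`. -/
noncomputable def Sa (x : ℝ) : ℝ := if x = 0 then 1 else Real.sin x / x

/-- `g δ k ω = Sa (δ (ω − (k−1)π))` for an integer index `k`. -/
noncomputable def g (δ : ℝ) (k : ℤ) (ω : ℝ) : ℝ := Sa (δ * (ω - ((k : ℝ) - 1) * π))

/-- `q_{m,n}(ω) = 2 cos((m − n)πψ) g_m(ω) g_n(ω)`. -/
noncomputable def q (δ ψ : ℝ) (m n : ℤ) (ω : ℝ) : ℝ :=
  2 * Real.cos (((m : ℝ) - (n : ℝ)) * π * ψ) * g δ m ω * g δ n ω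

/-- The index set `D = {(m,n) : 1 ≤ n ≤ N_t − 1, n + 1 ≤ m ≤ N_t}` of integer pairs. -/
noncomputable def D (Nt : ℕ) : Finset (ℤ × ℤ) :=
  (Finset.Icc (1 : ℤ) (Nt : ℤ) ×ˢ Finset.Icc (1 : ℤ) (Nt : ℤ)).filter
    (fun p => 1 ≤ p.2 ∧ p.2 ≤ (Nt : ℤ) - 1 ∧ p.2 + 1 ≤ p.1 ∧ p.1 ≤ (Nt : ℤ))

/-! Since `Sa` is even, the reflection `ω ↦ (N_t - 1)π - ω` turns `g_k` into `g_{N_t + 1 - k}`.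
Hence it turns `q_{m,n}` into `q_{N_t + 1 - n, N_t + 1 - m}`, and `(m, n) ↦ (N_t + 1 - n, N_t + 1 - m)`
is an involution of `D` that preserves `m - n`. -/

lemma Sa_neg (x : ℝ) : Sa (-x) = Sa x := by
  unfold Sa
  rcases eq_or_ne x 0 with rfl | hx
  · simp
  · rw [if_neg (neg_ne_zero.mpr hx), if_neg hx, Real.sin_neg, neg_div_neg_eq]

lemma g_reflect (δ : ℝ) (N k : ℤ) (ω : ℝ) :
    g δ k (((N : ℝ) - 1) * π - ω) = g δ (N + 1 - k) ω := by
  rw [g, g, ← Sa_neg]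
  push_cast
  ring_nf

lemma q_reflect (δ ψ : ℝ) (N m n : ℤ) (ω : ℝ) :
    q δ ψ m n (((N : ℝ) - 1) * π - ω) = q δ ψ (N + 1 - n) (N + 1 - m) ω := by
  have hdiff : ((N + 1 - n : ℤ) : ℝ) - ((N + 1 - m : ℤ) : ℝ) = (m : ℝ) - n := by
    push_cast
    ring
  rw [q, q, g_reflect, g_reflect, hdiff]
  ring

lemma mem_D {Nt : ℕ} {p : ℤ × ℤ} :
    p ∈ D Nt ↔ 1 ≤ p.2 ∧ p.2 ≤ (Nt : ℤ) - 1 ∧ p.2 + 1 ≤ p.1 ∧ p.1 ≤ (Nt : ℤ) := by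
  simp only [D, Finset.mem_filter, Finset.mem_product, Finset.mem_Icc]
  omega

def reflectIndex (N : ℤ) (p : ℤ × ℤ) : ℤ × ℤ := (N + 1 - p.2, N + 1 - p.1)

lemma reflectIndex_reflectIndex (N : ℤ) (p : ℤ × ℤ) : reflectIndex N (reflectIndex N p) = p := by
  simp [reflectIndex]

lemma reflectIndex_mem_D {Nt : ℕ} {p : ℤ × ℤ} (hp : p ∈ D Nt) : reflectIndex Nt p ∈ D Nt := by
  rw [mem_D] at hp ⊢
  simp only [reflectIndex]
  omega

theorem cross_sum_symm_general (Nt : ℕ) (δ ψ : ℝ) :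
    ∀ ω : ℝ,
      ∑ p ∈ D Nt, q δ ψ p.1 p.2 (((Nt : ℝ) - 1) * π - ω) =
        ∑ p ∈ D Nt, q δ ψ p.1 p.2 ω := by
  intro ω
  exact Finset.sum_nbij' (reflectIndex Nt) (reflectIndex Nt)
    (fun _ hp => reflectIndex_mem_D hp) (fun _ hp => reflectIndex_mem_D hp)
    (fun p _ => reflectIndex_reflectIndex Nt p) (fun p _ => reflectIndex_reflectIndex Nt p)
    (fun p _ => by exact_mod_cast q_reflect δ ψ Nt p.1 p.2 ω)

/-- The cross-term sum `∑_{(m,n)∈D} q_{m,n}(ω)` is symmetric about `ω = (N_t − 1)π/2`. -/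
theorem cross_sum_symm (Nt : ℕ) (hNt : 0 < Nt) (δ ψ : ℝ) :
    ∀ ω : ℝ,
      ∑ p ∈ D Nt, q δ ψ p.1 p.2 (((Nt : ℝ) - 1) * π - ω) =
        ∑ p ∈ D Nt, q δ ψ p.1 p.2 ω :=
  cross_sum_symm_general Nt δ ψ
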